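/- arXiv:1504.00239 — 6 statements merged into one kernel-verified Lean document; each statement's English description precedes it below -/
import Mathlib

section
/- Let (X, Σ, ν) be a finite measure space, let {f_k} and f be Σ-measurable nonnegative functions with f_k → f ν-a.e., and let {μ_k} and μ be measures absolutely continuous with respect to ν such that μ_k(A) → μ(A) for every A ∈ Σ. Then limsup_{k→∞} μ_k({f_k = 0}) ≤ μ({f = 0}). -/
open MeasureTheory Filter Topology

/-- Let `(X, Σ, ν)` be a finite measure space, `f_k → f` ν-a.e. with all
functions measurable and nonnegative, and let `μ_k`, `μ` be (finite) measures absolutely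
continuous w.r.t. `ν` with `μ_k A → μ A` for every measurable `A`. Then
`limsup_k μ_k {f_k = 0} ≤ μ {f = 0}`. -/
theorem limsup_measure_zero_set_le
    {X : Type*} [MeasurableSpace X] (ν : Measure X) [IsFiniteMeasure ν]
    (f : ℕ → X → ℝ) (g : X → ℝ)
    (hfm : ∀ k, Measurable (f k)) (hgm : Measurable g)
    (hfpos : ∀ k x, 0 ≤ f k x) (hgpos : ∀ x, 0 ≤ g x)
    (hae : ∀ᵐ x ∂ν, Tendsto (fun k => f k x) atTop (nhds (g x)))
    (μseq : ℕ → Measure X) (μ : Measure X)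
    (hfin : ∀ k, IsFiniteMeasure (μseq k)) [IsFiniteMeasure μ]
    (hac : ∀ k, μseq k ≪ ν) (hacμ : μ ≪ ν)
    (hconv : ∀ A : Set X, MeasurableSet A →
      Tendsto (fun k => μseq k A) atTop (nhds (μ A))) :
    limsup (fun k => μseq k {x | f k x = 0}) atTop ≤ μ {x | g x = 0} := by
  set ε : ℕ → ℝ := fun n => 1 / (n + 1) with hεdef
  have hεpos : ∀ n, 0 < ε n := fun n => by positivity
  set A : ℕ → ℕ → Set X := fun n j => {x | ε n < |f j x - g x|} with hAdef
  have hAm : ∀ n j, MeasurableSet (A n j) := fun n j =>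
    measurableSet_lt measurable_const ((hfm j).sub hgm).abs
  set D : ℕ → ℕ → Set X := fun n N => ⋃ j, ⋃ (_ : N ≤ j), A n j with hDdef
  have hDm : ∀ n N, MeasurableSet (D n N) := fun n N =>
    MeasurableSet.iUnion fun j => MeasurableSet.iUnion fun _ => hAm n j
  have hDanti : ∀ n, Antitone (D n) := by
    intro n N M hNM x hx
    simp only [hDdef, Set.mem_iUnion] at hx ⊢
    obtain ⟨j, hj, hxj⟩ := hx
    exact ⟨j, hNM.trans hj, hxj⟩
  have hDnull : ∀ n, μ (⋂ N, D n N) = 0 := by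
    intro n
    apply hacμ
    refine measure_mono_null (fun x hx => ?_) (ae_iff.mp hae)
    simp only [Set.mem_setOf_eq]
    intro htend
    obtain ⟨N, hN⟩ := (Metric.tendsto_atTop.mp htend (ε n) (hεpos n))
    have hxN : x ∈ D n N := Set.mem_iInter.mp hx N
    simp only [hDdef, Set.mem_iUnion, hAdef, Set.mem_setOf_eq] at hxN
    obtain ⟨j, hjN, hj⟩ := hxN
    have := hN j hjN
    rw [Real.dist_eq] at this
    exact absurd this (not_lt.mpr hj.le)
  have hGm : ∀ n, MeasurableSet {x | g x ≤ ε n} := fun n =>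
    measurableSet_le hgm measurable_const
  have key : ∀ n N, limsup (fun k => μseq k {x | f k x = 0}) atTop ≤
      μ ({x | g x ≤ ε n} ∪ D n N) := by
    intro n N
    have hSm : MeasurableSet ({x | g x ≤ ε n} ∪ D n N) := (hGm n).union (hDm n N)
    have hev : (fun k => μseq k {x | f k x = 0}) ≤ᶠ[atTop]
        (fun k => μseq k ({x | g x ≤ ε n} ∪ D n N)) := by
      filter_upwards [eventually_ge_atTop N] with k hk
      refine measure_mono fun x hx => ?_
      by_cases hgx : g x ≤ ε n
      · exact Or.inl hgx
      · refine Or.inr ?_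
        simp only [hDdef, Set.mem_iUnion]
        refine ⟨k, hk, ?_⟩
        have hx0 : f k x = 0 := hx
        simp only [hAdef, Set.mem_setOf_eq, hx0, zero_sub, abs_neg,
          abs_of_nonneg (hgpos x)]
        exact lt_of_not_ge hgx
    calc limsup (fun k => μseq k {x | f k x = 0}) atTop
        ≤ limsup (fun k => μseq k ({x | g x ≤ ε n} ∪ D n N)) atTop :=
          limsup_le_limsup hev
      _ = μ ({x | g x ≤ ε n} ∪ D n N) := (hconv _ hSm).limsup_eq
  have key2 : ∀ n, limsup (fun k => μseq k {x | f k x = 0}) atTop ≤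
      μ {x | g x ≤ ε n} := by
    intro n
    have htend : Tendsto (fun N => μ ({x | g x ≤ ε n} ∪ D n N)) atTop
        (𝓝 (μ (⋂ N, {x | g x ≤ ε n} ∪ D n N))) :=
      tendsto_measure_iInter_atTop (fun N => ((hGm n).union (hDm n N)).nullMeasurableSet)
        (fun N M hNM => Set.union_subset_union_right _ (hDanti n hNM))
        ⟨0, measure_ne_top _ _⟩
    have heq : μ (⋂ N, {x | g x ≤ ε n} ∪ D n N) = μ {x | g x ≤ ε n} := by
      rw [← Set.union_iInter]
      exact le_antisymm ((measure_union_le _ _).trans (by simp [hDnull n]))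
        (measure_mono Set.subset_union_left)
    rw [heq] at htend
    exact ge_of_tendsto' htend (key n)
  have htend2 : Tendsto (fun n => μ {x | g x ≤ ε n}) atTop
      (𝓝 (μ (⋂ n, {x | g x ≤ ε n}))) :=
    tendsto_measure_iInter_atTop (fun n => (hGm n).nullMeasurableSet)
      (fun n m hnm x hx => le_trans hx (by
        show ε m ≤ ε n
        simp only [hεdef]
        gcongr
        ))
      ⟨0, measure_ne_top _ _⟩
  have hiInter : (⋂ n, {x | g x ≤ ε n}) = {x | g x = 0} := by
    ext x
    simp only [Set.mem_iInter, Set.mem_setOf_eq]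
    constructor
    · intro h
      refine le_antisymm ?_ (hgpos x)
      exact ge_of_tendsto' tendsto_one_div_add_atTop_nhds_zero_nat h
    · intro h n; rw [h]; exact (hεpos n).le
  rw [hiInter] at htend2
  exact ge_of_tendsto' htend2 key2
end

section
/- Let (X, Σ, ν) be a finite measure space, let {f_n} and f be measurable nonnegative functions with f_n → f ν-a.e., and let {μ_n}, μ be nonnegative measures absolutely continuous with respect to ν with μ_n(A) → μ(A) for every measurable A. If lim_{n→∞} μ_n({f_n = 0}) = μ({f = 0}), then for every ε > 0 there exists j₀ ∈ ℕ such that for all j ≥ j₀, limsup_{n→∞} μ_n({0 < f_n ≤ 1/j}) < ε. -/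
open MeasureTheory Filter Topology

/-- If moreover `μ_n {f_n = 0} → μ {f = 0}`, then for every `ε > 0`
there exists `j₀` such that for all `j ≥ j₀`, `limsup_n μ_n {0 < f_n ≤ 1/j} < ε`. -/
theorem limsup_measure_small_values_lt
    {X : Type*} [MeasurableSpace X] (ν : Measure X) [IsFiniteMeasure ν]
    (f : ℕ → X → ℝ) (g : X → ℝ)
    (hfm : ∀ n, Measurable (f n)) (hgm : Measurable g)
    (hfpos : ∀ n x, 0 ≤ f n x) (hgpos : ∀ x, 0 ≤ g x)
    (hae : ∀ᵐ x ∂ν, Tendsto (fun n => f n x) atTop (nhds (g x)))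
    (μseq : ℕ → Measure X) (μ : Measure X)
    (hfin : ∀ n, IsFiniteMeasure (μseq n)) [IsFiniteMeasure μ]
    (hac : ∀ n, μseq n ≪ ν) (hacμ : μ ≪ ν)
    (hconv : ∀ A : Set X, MeasurableSet A →
      Tendsto (fun n => μseq n A) atTop (nhds (μ A)))
    (hzero : Tendsto (fun n => μseq n {x | f n x = 0}) atTop (nhds (μ {x | g x = 0}))) :
    ∀ ε : ℝ, 0 < ε → ∃ j₀ : ℕ, ∀ j : ℕ, j₀ ≤ j →
      limsup (fun n => μseq n {x | 0 < f n x ∧ f n x ≤ 1 / (j : ℝ)}) atTop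
        < ENNReal.ofReal ε := by
  intro ε hε
  -- the small-positive-value sets of `g`
  set A : ℕ → Set X := fun j => {x | 0 < g x ∧ g x * j ≤ 2} with hA
  have hAm : ∀ j, MeasurableSet (A j) :=
    fun j => (measurableSet_lt measurable_const hgm).inter
      (measurableSet_le (hgm.mul measurable_const) measurable_const)
  have hanti : Antitone A := by
    intro j j' hjj' x hx
    exact ⟨hx.1, le_trans (mul_le_mul_of_nonneg_left (by exact_mod_cast hjj') (hgpos x)) hx.2⟩
  have hAint : ⋂ j, A j = ∅ := by
    ext x
    simp only [Set.mem_iInter, Set.mem_empty_iff_false, iff_false, not_forall]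
    by_cases hx : 0 < g x
    · obtain ⟨j, hj⟩ := exists_nat_gt (2 / g x)
      refine ⟨j, fun h => ?_⟩
      have h2 : 2 < (j : ℝ) * g x := (div_lt_iff₀ hx).1 hj
      nlinarith [h.2]
    · exact ⟨0, fun h => hx h.1⟩
  have htendA : Tendsto (fun j => μ (A j)) atTop (nhds 0) := by
    have h := tendsto_measure_iInter_atTop (μ := μ)
      (fun j => (hAm j).nullMeasurableSet) hanti ⟨0, measure_ne_top μ _⟩
    rw [hAint, measure_empty] at h
    exact h
  have hev : ∀ᶠ j in atTop, μ (A j) < ENNReal.ofReal ε :=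
    htendA.eventually_lt_const (ENNReal.ofReal_pos.2 hε)
  obtain ⟨j₁, hj₁⟩ := eventually_atTop.1 hev
  refine ⟨max j₁ 1, fun j hj => ?_⟩
  have hj1 : 1 ≤ j := le_trans (le_max_right _ _) hj
  have hjpos : (0 : ℝ) < j := by exact_mod_cast hj1
  have hjinv : (0 : ℝ) < 1 / j := by positivity
  -- key estimate: limsup ≤ μ (A j)
  set E : ℕ → Set X := fun N => ⋂ (n) (_ : N ≤ n), {x | |f n x - g x| ≤ 1 / j} with hE
  have hEm : ∀ N, MeasurableSet (E N) := fun N =>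
    MeasurableSet.iInter fun n => MeasurableSet.iInter fun _ =>
      measurableSet_le ((hfm n).sub hgm).abs measurable_const
  have hEanti : Antitone fun N => (E N)ᶜ := by
    intro N M hNM
    refine Set.compl_subset_compl.2 fun x hx => ?_
    rw [Set.mem_iInter₂] at hx ⊢
    exact fun n hn => hx n (hNM.trans hn)
  have hEfull : μ (⋂ N, (E N)ᶜ) = 0 := by
    rw [← Set.compl_iUnion]
    refine hacμ ?_
    rw [Set.compl_def]
    have hmem : ∀ᵐ x ∂ν, x ∈ ⋃ N, E N := by
      refine hae.mono fun x hx => ?_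
      obtain ⟨N, hN⟩ := Metric.tendsto_atTop.1 hx (1 / j) hjinv
      refine Set.mem_iUnion.2 ⟨N, Set.mem_iInter₂.2 fun n hn => ?_⟩
      have := hN n hn
      rw [Real.dist_eq] at this
      exact this.le
    exact ae_iff.1 hmem
  have hEtend : Tendsto (fun N => μ (E N)ᶜ) atTop (nhds 0) := by
    have h := tendsto_measure_iInter_atTop (μ := μ)
      (fun N => (hEm N).compl.nullMeasurableSet) hEanti ⟨0, measure_ne_top μ _⟩
    rw [hEfull] at h
    exact h
  set C : Set X := {x | g x * j ≤ 2} with hC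
  have hCm : MeasurableSet C := measurableSet_le (hgm.mul measurable_const) measurable_const
  have hCdecomp : μ C = μ (A j) + μ {x | g x = 0} := by
    have hunion : A j ∪ {x | g x = 0} = C := by
      ext x
      constructor
      · rintro (h | h)
        · exact h.2
        · show g x * j ≤ 2
          rw [Set.mem_setOf_eq] at h
          rw [h]; norm_num
      · intro h
        rcases lt_or_eq_of_le (hgpos x) with hpos | heq
        · exact Or.inl ⟨hpos, h⟩
        · exact Or.inr heq.symm
    have hdisj : Disjoint (A j) {x | g x = 0} := by
      rw [Set.disjoint_left]
      intro x hx hx'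
      rw [Set.mem_setOf_eq] at hx'
      exact absurd hx' (ne_of_gt hx.1)
    rw [← hunion, measure_union hdisj (hgm (measurableSet_singleton 0))]
  have key : ∀ N : ℕ,
      limsup (fun n => μseq n {x | 0 < f n x ∧ f n x ≤ 1 / (j : ℝ)}) atTop
        ≤ μ (A j) + μ (E N)ᶜ := by
    intro N
    have hle : ∀ᶠ n in atTop,
        μseq n {x | 0 < f n x ∧ f n x ≤ 1 / (j : ℝ)}
          ≤ (μseq n C + μseq n (E N)ᶜ) - μseq n {x | f n x = 0} := by
      refine eventually_atTop.2 ⟨N, fun n hn => ?_⟩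
      refine ENNReal.le_sub_of_add_le_right (measure_ne_top _ _) ?_
      have hmeas0 : MeasurableSet {x | f n x = 0} := (hfm n) (measurableSet_singleton 0)
      have hdisj : Disjoint {x | 0 < f n x ∧ f n x ≤ 1 / (j : ℝ)} {x | f n x = 0} := by
        rw [Set.disjoint_left]
        intro x hx hx'
        rw [Set.mem_setOf_eq] at hx'
        exact absurd hx' (ne_of_gt hx.1)
      rw [← measure_union hdisj hmeas0]
      refine le_trans (measure_mono ?_) (measure_union_le _ _)
      intro x hx
      by_cases hxE : x ∈ E N
      · left
        have habs : |f n x - g x| ≤ 1 / j := Set.mem_iInter₂.1 hxE n hn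
        have hfx : f n x ≤ 1 / j := by
          rcases hx with h | h
          · exact h.2
          · rw [Set.mem_setOf_eq] at h; rw [h]; exact hjinv.le
        have habs' := abs_le.1 habs
        have hg2 : g x ≤ 2 / j := by
          have h1 : g x ≤ f n x + 1 / j := by linarith [habs'.1]
          calc g x ≤ 1 / j + 1 / j := by linarith
            _ = 2 / j := by ring
        show g x * j ≤ 2
        calc g x * j ≤ (2 / j) * j := by nlinarith
          _ = 2 := by field_simp
      · exact Or.inr hxE
    have htendh : Tendsto
        (fun n => (μseq n C + μseq n (E N)ᶜ) - μseq n {x | f n x = 0}) atTop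
        (nhds ((μ C + μ (E N)ᶜ) - μ {x | g x = 0})) := by
      refine ENNReal.Tendsto.sub ((hconv C hCm).add (hconv (E N)ᶜ (hEm N).compl)) hzero ?_
      exact Or.inl (by finiteness)
    calc limsup (fun n => μseq n {x | 0 < f n x ∧ f n x ≤ 1 / (j : ℝ)}) atTop
        ≤ limsup (fun n => (μseq n C + μseq n (E N)ᶜ) - μseq n {x | f n x = 0}) atTop :=
          limsup_le_limsup hle
      _ = (μ C + μ (E N)ᶜ) - μ {x | g x = 0} := htendh.limsup_eq
      _ = μ (A j) + μ (E N)ᶜ := by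
          rw [hCdecomp]
          rw [add_right_comm]
          exact ENNReal.add_sub_cancel_right (measure_ne_top μ _)
  have hfinal : limsup (fun n => μseq n {x | 0 < f n x ∧ f n x ≤ 1 / (j : ℝ)}) atTop
      ≤ μ (A j) := by
    have htend : Tendsto (fun N => μ (A j) + μ (E N)ᶜ) atTop (nhds (μ (A j))) := by
      have := (tendsto_const_nhds (x := μ (A j)) (f := atTop (α := ℕ))).add hEtend
      simpa using this
    exact ge_of_tendsto' htend key
  exact lt_of_le_of_lt hfinal (hj₁ j (le_trans (le_max_left _ _) hj))
end

section
/- Let (X, Σ, ν) be a finite measure space, let {f_n} and f be measurable nonnegative functions with f_n → f ν-a.e., and let {μ_n}, μ be nonnegative measures absolutely continuous with respect to ν with μ_n(A) → μ(A) for every measurable A. If lim_{n→∞} μ_n({f_n = 0}) = μ({f = 0}), then lim_{n→∞} μ_n({f_n = 0} Δ {f = 0}) = 0, where Δ denotes the symmetric difference of sets. -/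
/-!
Write `A n = {f n = 0}` and `B = {g = 0}`. Since `μ ≪ ν`, `f n → g` holds `μ`-a.e., so Egorov's
theorem for the finite measure `μ` gives a set `t` of small `μ`-measure off which the convergence
is uniform. Then eventually `A n \ B ⊆ t ∪ {0 < |g| < r}`, a fixed measurable set of small
`μ`-measure, and setwise convergence gives `μ_n (A n \ B) → 0`. For the other half,
`μ_n (B \ A n) + μ_n (A n) = μ_n B + μ_n (A n \ B) → μ B` while `μ_n (A n) → μ B < ∞`.
-/

open MeasureTheory Filter Topology Set ENNReal

lemma ENNReal.tendsto_sub_of_tendsto_add {ι : Type*} {l : Filter ι} {a b : ι → ℝ≥0∞}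
    {x y : ℝ≥0∞} (hab : Tendsto (fun i => a i + b i) l (𝓝 x)) (hb : Tendsto b l (𝓝 y))
    (hy : y ≠ ∞) : Tendsto a l (𝓝 (x - y)) :=
  (ENNReal.Tendsto.sub hab hb (Or.inr hy)).congr' <|
    (hb.eventually_ne hy).mono fun _ hi => ENNReal.add_sub_cancel_right hi

section

variable {X : Type*} [MeasurableSpace X]

lemma tendsto_measure_preimage_abs_Ioo_zero (μ : Measure X) [IsFiniteMeasure μ] {g : X → ℝ}
    (hg : Measurable g) :
    Tendsto (fun r => μ ((fun x => |g x|) ⁻¹' Ioo 0 r)) (𝓝[>] 0) (𝓝 0) := by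
  have hempty : ⋂ r > (0 : ℝ), (fun x => |g x|) ⁻¹' Ioo 0 r = ∅ :=
    eq_empty_of_forall_notMem fun x hx => by
      simp only [mem_iInter, mem_preimage, mem_Ioo] at hx
      exact (hx _ (hx 1 one_pos).1).2.false
  have h := tendsto_measure_biInter_gt (μ := μ) (s := fun r => (fun x => |g x|) ⁻¹' Ioo 0 r)
    (a := 0) (fun r _ => ((measurable_abs.comp hg) measurableSet_Ioo).nullMeasurableSet)
    (fun _ _ _ hij => preimage_mono (Ioo_subset_Ioo_right hij)) ⟨1, one_pos, measure_ne_top _ _⟩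
  rwa [hempty, measure_empty] at h

lemma exists_measure_lt_eventually_setOf_eq_zero_diff_subset {μ : Measure X}
    [IsFiniteMeasure μ] {f : ℕ → X → ℝ} {g : X → ℝ} (hf : ∀ n, Measurable (f n))
    (hg : Measurable g) (hfg : ∀ᵐ x ∂μ, Tendsto (fun n => f n x) atTop (𝓝 (g x)))
    {ε : ℝ≥0∞} (hε : 0 < ε) :
    ∃ U, MeasurableSet U ∧ μ U < ε ∧
      ∀ᶠ n in atTop, {x | f n x = 0} \ {x | g x = 0} ⊆ U := by
  have hε2 := ENNReal.half_pos hε.ne'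
  obtain ⟨r, hSr, hr⟩ := (((tendsto_measure_preimage_abs_Ioo_zero μ hg).eventually
    (eventually_lt_nhds hε2)).and self_mem_nhdsWithin).exists
  obtain ⟨δ, -, hδ, hδε⟩ := ENNReal.lt_iff_exists_real_btwn.mp hε2
  obtain ⟨t, ht, htδ, hunif⟩ := tendstoUniformlyOn_of_ae_tendsto'
    (fun n => (hf n).stronglyMeasurable) hg.stronglyMeasurable hfg (ENNReal.ofReal_pos.mp hδ)
  refine ⟨t ∪ (fun x => |g x|) ⁻¹' Ioo 0 r, ht.union ((measurable_abs.comp hg) measurableSet_Ioo),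
    ?_, ?_⟩
  · calc μ (t ∪ _) ≤ μ t + μ ((fun x => |g x|) ⁻¹' Ioo 0 r) := measure_union_le _ _
      _ < ε / 2 + ε / 2 := ENNReal.add_lt_add (htδ.trans_lt hδε) hSr
      _ = ε := ENNReal.add_halves ε
  · filter_upwards [Metric.tendstoUniformlyOn_iff.mp hunif r hr] with n hn x ⟨hfx, hgx⟩
    refine or_iff_not_imp_left.mpr fun hxt => ⟨abs_pos.mpr hgx, ?_⟩
    simpa [show f n x = 0 from hfx, Real.dist_eq] using hn x hxt

lemma tendsto_measure_of_exists_small_eventually_subset {ι : Type*} {l : Filter ι}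
    {μs : ι → Measure X} {μ : Measure X}
    (hμs : ∀ s, MeasurableSet s → Tendsto (fun i => μs i s) l (𝓝 (μ s))) {s : ι → Set X}
    (hs : ∀ ε > 0, ∃ U, MeasurableSet U ∧ μ U < ε ∧ ∀ᶠ i in l, s i ⊆ U) :
    Tendsto (fun i => μs i (s i)) l (𝓝 0) := by
  refine ENNReal.tendsto_nhds_zero.mpr fun ε hε => ?_
  obtain ⟨U, hU, hUε, hsU⟩ := hs ε hε
  filter_upwards [hsU, (hμs U hU).eventually_lt_const hUε] with i hi hiε
  exact (measure_mono hi).trans hiε.le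

lemma tendsto_measure_diff_of_tendsto_measure_diff {ι : Type*} {l : Filter ι}
    {μs : ι → Measure X} {A : ι → Set X} {B : Set X} {m : ℝ≥0∞}
    (hA : ∀ i, MeasurableSet (A i)) (hB : MeasurableSet B)
    (hAm : Tendsto (fun i => μs i (A i)) l (𝓝 m)) (hBm : Tendsto (fun i => μs i B) l (𝓝 m))
    (hm : m ≠ ∞) (hAB : Tendsto (fun i => μs i (A i \ B)) l (𝓝 0)) :
    Tendsto (fun i => μs i (B \ A i)) l (𝓝 0) := by
  have hsum : Tendsto (fun i => μs i (B \ A i) + μs i (A i)) l (𝓝 (m + 0)) := by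
    refine (hBm.add hAB).congr fun i => ?_
    rw [← measure_union disjoint_sdiff_left (hA i), add_comm,
      ← measure_union disjoint_sdiff_left hB,
      sdiff_union_self, sdiff_union_self, union_comm]
  simpa using ENNReal.tendsto_sub_of_tendsto_add hsum hAm hm

end

theorem tendsto_measure_symmDiff_zero_sets_general
    {X : Type*} [MeasurableSpace X] (ν : Measure X)
    (f : ℕ → X → ℝ) (g : X → ℝ)
    (hfm : ∀ n, Measurable (f n)) (hgm : Measurable g)
    (hae : ∀ᵐ x ∂ν, Tendsto (fun n => f n x) atTop (nhds (g x)))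
    (μseq : ℕ → Measure X) (μ : Measure X)
    [IsFiniteMeasure μ]
    (hacμ : μ ≪ ν)
    (hconv : ∀ A : Set X, MeasurableSet A →
      Tendsto (fun n => μseq n A) atTop (nhds (μ A)))
    (hzero : Tendsto (fun n => μseq n {x | f n x = 0}) atTop (nhds (μ {x | g x = 0}))) :
    Tendsto (fun n => μseq n
        (({x | f n x = 0} \ {x | g x = 0}) ∪ ({x | g x = 0} \ {x | f n x = 0})))
      atTop (nhds 0) := by
  have hzero_diff : Tendsto (fun n => μseq n ({x | f n x = 0} \ {x | g x = 0})) atTop (𝓝 0) :=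
    tendsto_measure_of_exists_small_eventually_subset hconv fun _ hε =>
      exists_measure_lt_eventually_setOf_eq_zero_diff_subset hfm hgm (hacμ.ae_le hae) hε
  have hB : MeasurableSet {x | g x = 0} := measurableSet_eq_fun hgm measurable_const
  have hdiff_zero : Tendsto (fun n => μseq n ({x | g x = 0} \ {x | f n x = 0})) atTop (𝓝 0) :=
    tendsto_measure_diff_of_tendsto_measure_diff
      (fun n => measurableSet_eq_fun (hfm n) measurable_const)
      hB hzero (hconv _ hB) (measure_ne_top μ _) hzero_diff
  exact tendsto_of_tendsto_of_tendsto_of_le_of_le tendsto_const_nhds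
    (by simpa using hzero_diff.add hdiff_zero) (fun _ => zero_le) fun _ => measure_union_le _ _

/-- If `μ_n {f_n = 0} → μ {f = 0}`, then the measure of the symmetric
difference `μ_n ({f_n = 0} Δ {f = 0}) → 0`. -/
theorem tendsto_measure_symmDiff_zero_sets
    {X : Type*} [MeasurableSpace X] (ν : Measure X) [IsFiniteMeasure ν]
    (f : ℕ → X → ℝ) (g : X → ℝ)
    (hfm : ∀ n, Measurable (f n)) (hgm : Measurable g)
    (hfpos : ∀ n x, 0 ≤ f n x) (hgpos : ∀ x, 0 ≤ g x)
    (hae : ∀ᵐ x ∂ν, Tendsto (fun n => f n x) atTop (nhds (g x)))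
    (μseq : ℕ → Measure X) (μ : Measure X)
    (hfin : ∀ n, IsFiniteMeasure (μseq n)) [IsFiniteMeasure μ]
    (hac : ∀ n, μseq n ≪ ν) (hacμ : μ ≪ ν)
    (hconv : ∀ A : Set X, MeasurableSet A →
      Tendsto (fun n => μseq n A) atTop (nhds (μ A)))
    (hzero : Tendsto (fun n => μseq n {x | f n x = 0}) atTop (nhds (μ {x | g x = 0}))) :
    Tendsto (fun n => μseq n
        (({x | f n x = 0} \ {x | g x = 0}) ∪ ({x | g x = 0} \ {x | f n x = 0})))
      atTop (nhds 0) :=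
  tendsto_measure_symmDiff_zero_sets_general ν f g hfm hgm hae μseq μ hacμ hconv hzero
end

section
/- Let (X, Σ, ν) be a finite measure space, {f_n}, f measurable nonnegative functions with f_n → f ν-a.e., and {μ_n}, μ nonnegative measures absolutely continuous with respect to ν with μ_n(A) → μ(A) for all measurable A. Then for each j ∈ ℕ, limsup_{n→∞} μ_n({f_n ≤ 1/j}) ≤ μ({f ≤ 1/j}). -/
open MeasureTheory Filter Topology ENNReal

/-- Under the standing hypotheses (finite measure space, `f_n → f` ν-a.e.,
`μ_n ≪ ν`, `μ ≪ ν`, setwise convergence `μ_n A → μ A`), for each `j`,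
`limsup_n μ_n {f_n ≤ 1/j} ≤ μ {f ≤ 1/j}`. -/
theorem limsup_measure_sublevel_le
    {X : Type*} [MeasurableSpace X] (ν : Measure X) [IsFiniteMeasure ν]
    (f : ℕ → X → ℝ) (g : X → ℝ)
    (hfm : ∀ n, Measurable (f n)) (hgm : Measurable g)
    (hfpos : ∀ n x, 0 ≤ f n x) (hgpos : ∀ x, 0 ≤ g x)
    (hae : ∀ᵐ x ∂ν, Tendsto (fun n => f n x) atTop (nhds (g x)))
    (μseq : ℕ → Measure X) (μ : Measure X)
    (hfin : ∀ n, IsFiniteMeasure (μseq n)) [IsFiniteMeasure μ]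
    (hac : ∀ n, μseq n ≪ ν) (hacμ : μ ≪ ν)
    (hconv : ∀ A : Set X, MeasurableSet A →
      Tendsto (fun n => μseq n A) atTop (nhds (μ A))) :
    ∀ j : ℕ, limsup (fun n => μseq n {x | f n x ≤ 1 / (j : ℝ)}) atTop
      ≤ μ {x | g x ≤ 1 / (j : ℝ)} := by
  intro j
  set c : ℝ := 1 / (j : ℝ) with hc
  refine ENNReal.le_of_forall_pos_le_add fun ε hε _ => ?_
  have hε2 : ((ε : ℝ≥0∞) / 2) ≠ 0 := by
    simp [ENNReal.div_eq_zero_iff, (by exact_mod_cast hε.ne' : (ε : ℝ≥0∞) ≠ 0)]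
  -- the decreasing family of sublevel sets of g
  set S : ℕ → Set X := fun m => {x | g x ≤ c + 1 / (m + 1 : ℝ)} with hS
  have hSm : ∀ m, MeasurableSet (S m) := fun m =>
    measurableSet_le hgm measurable_const
  have hSanti : Antitone S := by
    intro m m' hmm' x hx
    simp only [hS, Set.mem_setOf_eq] at hx ⊢
    have : (1 : ℝ) / (m' + 1) ≤ 1 / (m + 1) :=
      one_div_le_one_div_of_le (by positivity)
        (by exact_mod_cast Nat.succ_le_succ hmm')
    linarith
  have hSinter : ⋂ m, S m = {x | g x ≤ c} := by
    ext x
    simp only [Set.mem_iInter, Set.mem_setOf_eq, hS]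
    constructor
    · intro h
      by_contra hx
      push_neg at hx
      obtain ⟨m, hm⟩ := exists_nat_one_div_lt (sub_pos.mpr hx)
      have := h m
      linarith
    · intro h m
      have : (0:ℝ) < 1 / (m + 1) := by positivity
      linarith
  -- Step 1: pick k with μ (S k) ≤ μ {g ≤ c} + ε/2
  have htend : Tendsto (fun m => μ (S m)) atTop (𝓝 (μ {x | g x ≤ c})) := by
    have := tendsto_measure_iInter_atTop (μ := μ)
      (fun m => (hSm m).nullMeasurableSet) hSanti ⟨0, measure_ne_top μ _⟩
    rwa [hSinter] at this
  have hlt : μ {x | g x ≤ c} < μ {x | g x ≤ c} + (ε : ℝ≥0∞) / 2 :=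
    ENNReal.lt_add_right (measure_ne_top μ _) hε2
  obtain ⟨k, hk⟩ := (htend.eventually_lt_const hlt).exists
  -- Step 2: δ from absolute continuity of μ w.r.t. ν
  have hrn : ν.withDensity (μ.rnDeriv ν) = μ := Measure.withDensity_rnDeriv_eq μ ν hacμ
  have hint : ∫⁻ x, μ.rnDeriv ν x ∂ν ≠ ∞ := by
    have := Measure.lintegral_rnDeriv_lt_top μ ν
    exact this.ne
  obtain ⟨δ, hδpos, hδ⟩ := exists_pos_setLIntegral_lt_of_measure_lt (μ := ν) hint hε2
  have hμs : ∀ s : Set X, MeasurableSet s → ν s < δ → μ s < (ε : ℝ≥0∞) / 2 := by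
    intro s hs hνs
    have : μ s = ∫⁻ x in s, μ.rnDeriv ν x ∂ν := by
      conv_lhs => rw [← hrn]
      exact withDensity_apply _ hs
    rw [this]
    exact hδ s hνs
  -- Step 3: Egorov
  obtain ⟨r, hr0, hrδ⟩ : ∃ r : ℝ, 0 < r ∧ ENNReal.ofReal r < δ := by
    rcases ENNReal.lt_iff_exists_real_btwn.mp hδpos with ⟨r, -, hr1, hr2⟩
    exact ⟨r, ENNReal.ofReal_pos.mp (by simpa using hr1), hr2⟩
  obtain ⟨t, htm, htν, htu⟩ := tendstoUniformlyOn_of_ae_tendsto' (μ := ν)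
    (fun n => (hfm n).stronglyMeasurable) hgm.stronglyMeasurable hae hr0
  have hμt : μ t < (ε : ℝ≥0∞) / 2 := hμs t htm (lt_of_le_of_lt htν hrδ)
  -- Step 4: eventual inclusion {f n ≤ c} ⊆ S k ∪ t
  have hunif := (Metric.tendstoUniformlyOn_iff.mp htu) (1 / (k + 1 : ℝ)) (by positivity)
  have hev : ∀ᶠ n in atTop,
      μseq n {x | f n x ≤ c} ≤ μseq n (S k) + μseq n t := by
    filter_upwards [hunif] with n hn
    have hsub : {x | f n x ≤ c} ⊆ S k ∪ t := by
      intro x hx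
      by_cases hxt : x ∈ t
      · exact Or.inr hxt
      · left
        have := hn x hxt
        rw [Real.dist_eq, abs_sub_lt_iff] at this
        have hfx : f n x ≤ c := hx
        simp only [hS, Set.mem_setOf_eq]
        linarith [this.1]
    calc μseq n {x | f n x ≤ c} ≤ μseq n (S k ∪ t) := measure_mono hsub
      _ ≤ μseq n (S k) + μseq n t := measure_union_le _ _
  -- Step 5: conclude via limsup
  have htendsum : Tendsto (fun n => μseq n (S k) + μseq n t) atTop
      (𝓝 (μ (S k) + μ t)) :=
    (hconv (S k) (hSm k)).add (hconv t htm)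
  calc limsup (fun n => μseq n {x | f n x ≤ c}) atTop
      ≤ limsup (fun n => μseq n (S k) + μseq n t) atTop :=
        limsup_le_limsup hev
    _ = μ (S k) + μ t := htendsum.limsup_eq
    _ ≤ (μ {x | g x ≤ c} + (ε : ℝ≥0∞) / 2) + (ε : ℝ≥0∞) / 2 :=
        add_le_add hk.le hμt.le
    _ = μ {x | g x ≤ c} + (ε : ℝ≥0∞) := by
        rw [add_assoc, ENNReal.add_halves]
end

section
/- Let (X, Σ, ν) be a finite measure space and let μ_n, μ be finite measures with densities g_n, g ∈ L¹(X, ν) respectively (dμ_n = g_n dν, dμ = g dν). Then μ_n(A) → μ(A) for every A ∈ Σ if and only if g_n ⇀ g weakly in L¹(X, ν). -/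
/-! Setwise convergence is weak convergence tested against indicators. Conversely, linearity
extends it to simple functions, and a bounded measurable function is a uniform limit of simple
functions. Because the densities are nonnegative, a uniform error `δ` costs at most `δ * ∫ g n`
against `g n`, and these total masses converge (take `A = univ`), so they are eventually
bounded. -/

open MeasureTheory Filter Topology

theorem ENNReal.tendsto_ofReal_iff_of_nonneg {ι : Type*} {l : Filter ι} {u : ι → ℝ} {a : ℝ}
    (hu : ∀ i, 0 ≤ u i) (ha : 0 ≤ a) :
    Tendsto (fun i => ENNReal.ofReal (u i)) l (𝓝 (ENNReal.ofReal a)) ↔ Tendsto u l (𝓝 a) := by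
  rw [← ENNReal.tendsto_toReal_iff (fun _ => ENNReal.ofReal_ne_top) ENNReal.ofReal_ne_top,
    ENNReal.toReal_ofReal ha]
  simp only [ENNReal.toReal_ofReal (hu _)]

theorem tendsto_of_uniform_approx {ι : Type*} {l : Filter ι} {a : ι → ℝ} {a₀ : ℝ}
    (h : ∀ δ > 0, ∃ (b : ι → ℝ) (b₀ : ℝ), Tendsto b l (𝓝 b₀) ∧
      (∀ᶠ i in l, |a i - b i| ≤ δ) ∧ |a₀ - b₀| ≤ δ) :
    Tendsto a l (𝓝 a₀) := by
  refine Metric.tendsto_nhds.2 fun ε hε => ?_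
  obtain ⟨b, b₀, hb, hab, hab₀⟩ := h (ε / 3) (by positivity)
  filter_upwards [hab, Metric.tendsto_nhds.1 hb (ε / 3) (by positivity)] with i hi hbi
  rw [Real.dist_eq] at hbi ⊢
  calc |a i - a₀| ≤ |a i - b i| + |b i - b₀| + |a₀ - b₀| := by
        linarith [abs_sub_le (a i) (b i) a₀, abs_sub_le (b i) b₀ a₀, abs_sub_comm b₀ a₀]
    _ < ε := by linarith

theorem Measurable.exists_simpleFunc_abs_sub_le {X : Type*} [MeasurableSpace X] {h : X → ℝ}
    (hm : Measurable h) {M : ℝ} (hM : ∀ x, |h x| ≤ M) {δ : ℝ} (hδ : 0 < δ) :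
    ∃ φ : SimpleFunc X ℝ, ∀ x, |h x - φ x| ≤ δ := by
  set φ : X → ℝ := fun x => δ * ⌊h x / δ⌋
  have hφm : Measurable φ := measurable_const.mul (measurable_from_top.comp (hm.div_const δ).floor)
  have hφfin : (Set.range φ).Finite := by
    refine ((Set.finite_Icc ⌊-M / δ⌋ ⌊M / δ⌋).image fun j : ℤ => δ * j).subset ?_
    rintro - ⟨x, rfl⟩
    obtain ⟨hlo, hhi⟩ := abs_le.1 (hM x)
    exact ⟨_, ⟨Int.floor_mono (by gcongr), Int.floor_mono (by gcongr)⟩, rfl⟩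
  refine ⟨⟨φ, fun y => hφm (measurableSet_singleton y), hφfin⟩, fun x => ?_⟩
  have hfract : h x - φ x = δ * Int.fract (h x / δ) := by
    rw [← Int.self_sub_floor, mul_sub, mul_div_cancel₀ _ hδ.ne']
  simp only [SimpleFunc.coe_mk, hfract, abs_of_nonneg (mul_nonneg hδ.le (Int.fract_nonneg _))]
  exact mul_le_of_le_one_right hδ.le (Int.fract_lt_one _).le

section

variable {X : Type*} [MeasurableSpace X] {ν : Measure X}

theorem withDensity_ofReal_apply_eq_ofReal_setIntegral {f : X → ℝ} (hf : Integrable f ν)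
    (hf0 : 0 ≤ᵐ[ν] f) {A : Set X} (hA : MeasurableSet A) :
    ν.withDensity (fun x => ENNReal.ofReal (f x)) A = ENNReal.ofReal (∫ x in A, f x ∂ν) := by
  rw [withDensity_apply _ hA,
    ofReal_integral_eq_lintegral_ofReal hf.integrableOn (ae_restrict_of_ae hf0)]

theorem tendsto_withDensity_ofReal_apply_iff {ι : Type*} {l : Filter ι} {f : ι → X → ℝ}
    {f₀ : X → ℝ} (hf : ∀ i, Integrable (f i) ν) (hf0 : ∀ i, 0 ≤ᵐ[ν] f i)
    (hf₀ : Integrable f₀ ν) (hf₀0 : 0 ≤ᵐ[ν] f₀) {A : Set X} (hA : MeasurableSet A) :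
    Tendsto (fun i => ν.withDensity (fun x => ENNReal.ofReal (f i x)) A) l
        (𝓝 (ν.withDensity (fun x => ENNReal.ofReal (f₀ x)) A)) ↔
      Tendsto (fun i => ∫ x in A, f i x ∂ν) l (𝓝 (∫ x in A, f₀ x ∂ν)) := by
  simp only [withDensity_ofReal_apply_eq_ofReal_setIntegral (hf _) (hf0 _) hA,
    withDensity_ofReal_apply_eq_ofReal_setIntegral hf₀ hf₀0 hA]
  exact ENNReal.tendsto_ofReal_iff_of_nonneg
    (fun i => integral_nonneg_of_ae (ae_restrict_of_ae (hf0 i)))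
    (integral_nonneg_of_ae (ae_restrict_of_ae hf₀0))

theorem integral_mul_indicator_const (f : X → ℝ) {A : Set X} (hA : MeasurableSet A) (c : ℝ) :
    ∫ x, f x * A.indicator (fun _ => c) x ∂ν = (∫ x in A, f x ∂ν) * c := by
  simp only [← Set.indicator_mul_right]
  rw [integral_indicator hA, integral_mul_const]

theorem MeasureTheory.Integrable.mul_simpleFunc {f : X → ℝ} (hf : Integrable f ν)
    (φ : SimpleFunc X ℝ) :
    Integrable (fun x => f x * φ x) ν :=
  (hf.simpleFunc_mul φ).congr (ae_of_all _ fun _ => mul_comm _ _)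

theorem abs_integral_mul_sub_integral_mul_le {f k k' : X → ℝ} (hf : Integrable f ν)
    (hf0 : 0 ≤ᵐ[ν] f) (hk : Integrable (fun x => f x * k x) ν)
    (hk' : Integrable (fun x => f x * k' x) ν) {δ : ℝ} (hδ : ∀ x, |k x - k' x| ≤ δ) :
    |∫ x, f x * k x ∂ν - ∫ x, f x * k' x ∂ν| ≤ δ * ∫ x, f x ∂ν := by
  rw [← integral_sub hk hk', ← integral_const_mul, ← Real.norm_eq_abs]
  refine norm_integral_le_of_norm_le (hf.const_mul δ) (hf0.mono fun x hx => ?_)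
  rw [← mul_sub, norm_mul, Real.norm_of_nonneg hx, Real.norm_eq_abs, mul_comm]
  exact mul_le_mul_of_nonneg_right (hδ x) hx

variable {ι : Type*} {l : Filter ι} {f : ι → X → ℝ} {f₀ : X → ℝ}

theorem tendsto_integral_mul_simpleFunc_of_tendsto_setIntegral
    (hf : ∀ i, Integrable (f i) ν) (hf₀ : Integrable f₀ ν)
    (h : ∀ A, MeasurableSet A →
      Tendsto (fun i => ∫ x in A, f i x ∂ν) l (𝓝 (∫ x in A, f₀ x ∂ν)))
    (φ : SimpleFunc X ℝ) :
    Tendsto (fun i => ∫ x, f i x * φ x ∂ν) l (𝓝 (∫ x, f₀ x * φ x ∂ν)) := by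
  induction φ using SimpleFunc.induction with
  | @const c A hA =>
    have hind : ⇑(SimpleFunc.piecewise A hA (SimpleFunc.const X c) (SimpleFunc.const X 0)) =
        A.indicator fun _ => c := by
      ext x; by_cases hx : x ∈ A <;> simp [hx]
    simp only [hind, integral_mul_indicator_const _ hA]
    exact (h A hA).mul_const c
  | @add φ ψ _ hφ hψ =>
    have hsplit : ∀ g : X → ℝ, Integrable g ν →
        ∫ x, g x * (φ + ψ) x ∂ν = ∫ x, g x * φ x ∂ν + ∫ x, g x * ψ x ∂ν := fun g hg => by
      simp only [SimpleFunc.coe_add, Pi.add_apply, mul_add]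
      exact integral_add (hg.mul_simpleFunc φ) (hg.mul_simpleFunc ψ)
    simp only [hsplit _ (hf _), hsplit _ hf₀]
    exact hφ.add hψ

theorem tendsto_integral_mul_of_tendsto_setIntegral
    (hf : ∀ i, Integrable (f i) ν) (hf0 : ∀ i, 0 ≤ᵐ[ν] f i)
    (hf₀ : Integrable f₀ ν) (hf₀0 : 0 ≤ᵐ[ν] f₀)
    (h : ∀ A, MeasurableSet A →
      Tendsto (fun i => ∫ x in A, f i x ∂ν) l (𝓝 (∫ x in A, f₀ x ∂ν)))
    {k : X → ℝ} (hk : Measurable k) {M : ℝ} (hM : ∀ x, |k x| ≤ M) :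
    Tendsto (fun i => ∫ x, f i x * k x ∂ν) l (𝓝 (∫ x, f₀ x * k x ∂ν)) := by
  set C := ∫ x, f₀ x ∂ν + 1
  have hC : 0 < C := by have := integral_nonneg_of_ae hf₀0; positivity
  have hmass : ∀ᶠ i in l, ∫ x, f i x ∂ν ≤ C := by
    have := h Set.univ MeasurableSet.univ
    simp only [Measure.restrict_univ] at this
    exact this.eventually (eventually_le_nhds (lt_add_one _))
  have hint : ∀ g : X → ℝ, Integrable g ν → Integrable (fun x => g x * k x) ν := fun g hg =>
    hg.mul_bdd hk.aestronglyMeasurable (ae_of_all _ fun x => (Real.norm_eq_abs _).trans_le (hM x))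
  refine tendsto_of_uniform_approx fun δ hδ => ?_
  obtain ⟨φ, hφ⟩ := hk.exists_simpleFunc_abs_sub_le hM (div_pos hδ hC)
  have hclose : ∀ g : X → ℝ, Integrable g ν → 0 ≤ᵐ[ν] g → ∫ x, g x ∂ν ≤ C →
      |∫ x, g x * k x ∂ν - ∫ x, g x * φ x ∂ν| ≤ δ := fun g hg hg0 hgC =>
    calc _ ≤ δ / C * ∫ x, g x ∂ν :=
          abs_integral_mul_sub_integral_mul_le hg hg0 (hint g hg) (hg.mul_simpleFunc φ) hφ
      _ ≤ δ / C * C := by gcongr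
      _ = δ := div_mul_cancel₀ δ hC.ne'
  refine ⟨_, _, tendsto_integral_mul_simpleFunc_of_tendsto_setIntegral hf hf₀ h φ,
    hmass.mono fun i hi => hclose _ (hf i) (hf0 i) hi, hclose _ hf₀ hf₀0 (lt_add_one _).le⟩

theorem tendsto_setIntegral_of_tendsto_integral_mul
    (h : ∀ k : X → ℝ, Measurable k → (∃ M : ℝ, ∀ x, |k x| ≤ M) →
      Tendsto (fun i => ∫ x, f i x * k x ∂ν) l (𝓝 (∫ x, f₀ x * k x ∂ν)))
    {A : Set X} (hA : MeasurableSet A) :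
    Tendsto (fun i => ∫ x in A, f i x ∂ν) l (𝓝 (∫ x in A, f₀ x ∂ν)) := by
  have hbdd : ∀ x, |A.indicator (fun _ => (1 : ℝ)) x| ≤ 1 := fun x => by
    by_cases hx : x ∈ A <;> simp [hx]
  simpa only [integral_mul_indicator_const _ hA, mul_one] using
    h _ (measurable_const.indicator hA) ⟨1, hbdd⟩

end

theorem setwise_convergence_iff_weakL1_of_densities_general
    {X : Type*} [MeasurableSpace X] (ν : Measure X)
    (g : ℕ → X → ℝ) (g₀ : X → ℝ)
    (hgpos : ∀ n x, 0 ≤ g n x) (hg₀pos : ∀ x, 0 ≤ g₀ x)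
    (hgi : ∀ n, Integrable (g n) ν) (hg₀i : Integrable g₀ ν) :
    (∀ A : Set X, MeasurableSet A →
        Tendsto (fun n => ν.withDensity (fun x => ENNReal.ofReal (g n x)) A) atTop
          (nhds (ν.withDensity (fun x => ENNReal.ofReal (g₀ x)) A)))
    ↔ (∀ h : X → ℝ, Measurable h → (∃ M : ℝ, ∀ x, |h x| ≤ M) →
        Tendsto (fun n => ∫ x, g n x * h x ∂ν) atTop (nhds (∫ x, g₀ x * h x ∂ν))) := by
  have hg0 : ∀ n, 0 ≤ᵐ[ν] g n := fun n => ae_of_all _ (hgpos n)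
  have hg₀0 : 0 ≤ᵐ[ν] g₀ := ae_of_all _ hg₀pos
  rw [forall₂_congr fun A (hA : MeasurableSet A) =>
    tendsto_withDensity_ofReal_apply_iff hgi hg0 hg₀i hg₀0 hA]
  exact ⟨fun H h hm ⟨M, hM⟩ =>
      tendsto_integral_mul_of_tendsto_setIntegral hgi hg0 hg₀i hg₀0 H hm hM,
    fun H A hA => tendsto_setIntegral_of_tendsto_integral_mul H hA⟩

/-- For finite measures `μ_n = g_n dν`, `μ = g dν` with integrable
nonnegative densities, setwise convergence `μ_n A → μ A` for every measurable `A` is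
equivalent to weak `L¹(ν)` convergence of the densities, i.e. `∫ g_n h dν → ∫ g h dν`
for every bounded measurable `h`. -/
theorem setwise_convergence_iff_weakL1_of_densities
    {X : Type*} [MeasurableSpace X] (ν : Measure X) [IsFiniteMeasure ν]
    (g : ℕ → X → ℝ) (g₀ : X → ℝ)
    (hgm : ∀ n, Measurable (g n)) (hg₀m : Measurable g₀)
    (hgpos : ∀ n x, 0 ≤ g n x) (hg₀pos : ∀ x, 0 ≤ g₀ x)
    (hgi : ∀ n, Integrable (g n) ν) (hg₀i : Integrable g₀ ν) :
    (∀ A : Set X, MeasurableSet A →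
        Tendsto (fun n => ν.withDensity (fun x => ENNReal.ofReal (g n x)) A) atTop
          (nhds (ν.withDensity (fun x => ENNReal.ofReal (g₀ x)) A)))
    ↔ (∀ h : X → ℝ, Measurable h → (∃ M : ℝ, ∀ x, |h x| ≤ M) →
        Tendsto (fun n => ∫ x, g n x * h x ∂ν) atTop (nhds (∫ x, g₀ x * h x ∂ν))) :=
  setwise_convergence_iff_weakL1_of_densities_general ν g g₀ hgpos hg₀pos hgi hg₀i
end

section
/- Let (X, Σ, ν) be a finite measure space, {f_n}, f measurable nonnegative functions with f_n → f ν-a.e., let {μ_n}, μ be nonnegative measures absolutely continuous w.r.t. ν with μ_n(A) → μ(A) for every A ∈ Σ, and assume μ_n({f_n = 0}) → μ({f = 0}). Then for any uniformly bounded sequence of measurable functions h_n : X → ℝ with ‖h_n‖_∞ ≤ M, one has ∫_X (χ_{{f_n=0}} − χ_{{f=0}}) h_n dμ_n → 0 as n → ∞. -/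
open MeasureTheory Filter Topology

open scoped ENNReal symmDiff

/-!
Where `f n x → g x` and `g x ≠ 0`, eventually `f n x ≠ 0`; so `μ`-almost every point lies in only
finitely many of the sets `{f n = 0} \ {g = 0}`, and setwise convergence `μₙ → μ` then forces
`μₙ ({f n = 0} \ {g = 0}) → 0`. As `μₙ {f n = 0}` and `μₙ {g = 0}` have the same limit, the whole
symmetric difference has vanishing `μₙ`-measure, and it bounds the integral up to the factor `M`.
-/

section

variable {X : Type*} [MeasurableSpace X]

theorem tendsto_measure_of_ae_eventually_notMem {μs : ℕ → Measure X} {μ : Measure X}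
    [IsFiniteMeasure μ]
    (hconv : ∀ A, MeasurableSet A → Tendsto (fun n => μs n A) atTop (𝓝 (μ A)))
    {S : ℕ → Set X} (hS : ∀ n, MeasurableSet (S n)) (hae : ∀ᵐ x ∂μ, ∀ᶠ n in atTop, x ∉ S n) :
    Tendsto (fun n => μs n (S n)) atTop (𝓝 0) := by
  set T : ℕ → Set X := fun k => ⋃ n ≥ k, S n
  have hT_meas : ∀ k, MeasurableSet (T k) := fun k =>
    MeasurableSet.biUnion (Set.to_countable _) fun n _ => hS n
  have hT_anti : Antitone T := fun i j hij =>
    Set.biUnion_mono (fun n hn => hij.trans hn) fun _ _ => le_rfl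
  have hT_null : μ (⋂ k, T k) = 0 := by
    refine measure_mono_null (fun x hx => ?_) (ae_iff.mp hae)
    simpa [T, frequently_atTop] using hx
  have hT_lim : Tendsto (fun k => μ (T k)) atTop (𝓝 0) :=
    hT_null ▸ tendsto_measure_iInter_atTop (fun k => (hT_meas k).nullMeasurableSet) hT_anti
      ⟨0, measure_ne_top μ _⟩
  refine tendsto_order.2 ⟨fun a ha => (ENNReal.not_lt_zero ha).elim, fun ε hε => ?_⟩
  obtain ⟨k, hk⟩ := (hT_lim.eventually_lt_const hε).exists
  filter_upwards [(hconv _ (hT_meas k)).eventually_lt_const hk, eventually_ge_atTop k]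
    with n hn hkn
  exact (measure_mono (Set.subset_biUnion_of_mem (u := S) hkn)).trans_lt hn

theorem measure_symmDiff_add_measure (μ : Measure X) {A B : Set X} (hA : MeasurableSet A)
    (hB : MeasurableSet B) : μ (A ∆ B) + μ A = 2 * μ (A \ B) + μ B := by
  rw [measure_symmDiff_eq hA.nullMeasurableSet hB.nullMeasurableSet,
    ← measure_sdiff_add_inter A hB, ← measure_sdiff_add_inter B hA, Set.inter_comm B A]
  ring

theorem tendsto_measure_symmDiff_of_tendsto {μs : ℕ → Measure X} [∀ n, IsFiniteMeasure (μs n)]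
    {A : ℕ → Set X} {B : Set X} {c : ℝ≥0∞} (hc : c ≠ ∞) (hA : ∀ n, MeasurableSet (A n))
    (hB : MeasurableSet B) (hAB : Tendsto (fun n => μs n (A n \ B)) atTop (𝓝 0))
    (hAc : Tendsto (fun n => μs n (A n)) atTop (𝓝 c))
    (hBc : Tendsto (fun n => μs n B) atTop (𝓝 c)) :
    Tendsto (fun n => μs n (A n ∆ B)) atTop (𝓝 0) := by
  have hrepr : ∀ n, μs n (A n ∆ B) = 2 * μs n (A n \ B) + μs n B - μs n (A n) := fun n =>
    ENNReal.eq_sub_of_add_eq (measure_ne_top _ _) (measure_symmDiff_add_measure _ (hA n) hB)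
  simp_rw [hrepr]
  simpa using ENNReal.Tendsto.sub
    ((ENNReal.Tendsto.const_mul hAB (Or.inr ENNReal.ofNat_ne_top)).add hBc) hAc
    (Or.inl (by simpa using hc))

theorem norm_integral_indicator_sub_indicator_mul_le {μ : Measure X} [IsFiniteMeasure μ]
    {A B : Set X} (hA : MeasurableSet A) (hB : MeasurableSet B) {h : X → ℝ} {M : ℝ}
    (hM : ∀ x, |h x| ≤ M) :
    ‖∫ x, (A.indicator (fun _ => (1:ℝ)) x - B.indicator (fun _ => (1:ℝ)) x) * h x ∂μ‖
      ≤ μ.real (A ∆ B) * M := by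
  have hbound : ∀ x, ‖(A.indicator (fun _ => (1:ℝ)) x - B.indicator (fun _ => (1:ℝ)) x) * h x‖
      ≤ (A ∆ B).indicator (fun _ => M) x := by
    intro x
    by_cases hxA : x ∈ A <;> by_cases hxB : x ∈ B <;> simp [hxA, hxB, Set.mem_symmDiff, hM x]
  calc _ ≤ ∫ x, (A ∆ B).indicator (fun _ => M) x ∂μ :=
        norm_integral_le_of_norm_le ((integrable_const M).indicator (hA.symmDiff hB))
          (.of_forall hbound)
    _ = μ.real (A ∆ B) * M := integral_indicator_const M (hA.symmDiff hB)

end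

theorem tendsto_integral_indicator_diff_zero_general
    {X : Type*} [MeasurableSpace X] (ν : Measure X)
    (f : ℕ → X → ℝ) (g : X → ℝ)
    (hfm : ∀ n, Measurable (f n)) (hgm : Measurable g)
    (hae : ∀ᵐ x ∂ν, Tendsto (fun n => f n x) atTop (nhds (g x)))
    (μseq : ℕ → Measure X) (μ : Measure X)
    (hfin : ∀ n, IsFiniteMeasure (μseq n)) [IsFiniteMeasure μ]
    (hacμ : μ ≪ ν)
    (hconv : ∀ A : Set X, MeasurableSet A →
      Tendsto (fun n => μseq n A) atTop (nhds (μ A)))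
    (hzero : Tendsto (fun n => μseq n {x | f n x = 0}) atTop (nhds (μ {x | g x = 0})))
    (h : ℕ → X → ℝ)
    (M : ℝ) (hM : ∀ n x, |h n x| ≤ M) :
    Tendsto (fun n => ∫ x,
        (Set.indicator {x | f n x = 0} (fun _ => (1:ℝ)) x
          - Set.indicator {x | g x = 0} (fun _ => (1:ℝ)) x) * h n x ∂(μseq n))
      atTop (nhds 0) := by
  have := hfin
  have hA : ∀ n, MeasurableSet {x | f n x = 0} := fun n => hfm n (measurableSet_singleton 0)
  have hB : MeasurableSet {x | g x = 0} := hgm (measurableSet_singleton 0)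
  have hlim_sdiff : Tendsto (fun n => μseq n ({x | f n x = 0} \ {x | g x = 0})) atTop (𝓝 0) := by
    refine tendsto_measure_of_ae_eventually_notMem hconv (fun n => (hA n).diff hB) ?_
    filter_upwards [hacμ.ae_le hae] with x hx
    by_cases hgx : g x = 0
    · exact .of_forall fun n hmem => hmem.2 hgx
    · exact (hx.eventually (eventually_ne_nhds hgx)).mono fun n hfx hmem => hfx hmem.1
  have hlim_symmDiff : Tendsto (fun n => (μseq n).real ({x | f n x = 0} ∆ {x | g x = 0}))
      atTop (𝓝 0) := by
    simpa [Function.comp_def, measureReal_def] using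
      (ENNReal.tendsto_toReal ENNReal.zero_ne_top).comp
      (tendsto_measure_symmDiff_of_tendsto (measure_ne_top μ _) hA hB hlim_sdiff hzero
        (hconv _ hB))
  refine squeeze_zero_norm (fun n => norm_integral_indicator_sub_indicator_mul_le (hA n) hB
    (hM n)) ?_
  simpa using hlim_symmDiff.mul_const M

/-- Under the standing hypotheses plus `μ_n {f_n = 0} → μ {f = 0}`,
for any uniformly bounded measurable `h_n`,
`∫ (χ_{{f_n=0}} − χ_{{f=0}}) h_n dμ_n → 0`. -/
theorem tendsto_integral_indicator_diff_zero
    {X : Type*} [MeasurableSpace X] (ν : Measure X) [IsFiniteMeasure ν]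
    (f : ℕ → X → ℝ) (g : X → ℝ)
    (hfm : ∀ n, Measurable (f n)) (hgm : Measurable g)
    (hfpos : ∀ n x, 0 ≤ f n x) (hgpos : ∀ x, 0 ≤ g x)
    (hae : ∀ᵐ x ∂ν, Tendsto (fun n => f n x) atTop (nhds (g x)))
    (μseq : ℕ → Measure X) (μ : Measure X)
    (hfin : ∀ n, IsFiniteMeasure (μseq n)) [IsFiniteMeasure μ]
    (hac : ∀ n, μseq n ≪ ν) (hacμ : μ ≪ ν)
    (hconv : ∀ A : Set X, MeasurableSet A →
      Tendsto (fun n => μseq n A) atTop (nhds (μ A)))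
    (hzero : Tendsto (fun n => μseq n {x | f n x = 0}) atTop (nhds (μ {x | g x = 0})))
    (h : ℕ → X → ℝ) (hhm : ∀ n, Measurable (h n))
    (M : ℝ) (hM : ∀ n x, |h n x| ≤ M) :
    Tendsto (fun n => ∫ x,
        (Set.indicator {x | f n x = 0} (fun _ => (1:ℝ)) x
          - Set.indicator {x | g x = 0} (fun _ => (1:ℝ)) x) * h n x ∂(μseq n))
      atTop (nhds 0) :=
  tendsto_integral_indicator_diff_zero_general ν f g hfm hgm hae μseq μ hfin hacμ hconv hzero h M hM
end
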